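/- Let T > 0, r ≥ 1, γ ∈ (0,1], μ ∈ (0,1], and let m ≥ 1 be an integer. Then for every integer N ≥ 2 and every n ∈ {2,…,N} with m ≤ n−1, one has Σ_{j=1}^{n−m} ∫_{t_j}^{t_{j+1}} (t_n − s)^{mγ−1}·t_j^{μ−1} ds ≤ B̃(mγ, μ)·t_n^{mγ+μ−1}, where B̃(mγ, μ) := 2^{r(1−μ)}·B(mγ, μ)·max{2^{1−mγ−μ}, 1}. -/
import Mathlib


/-- The graded mesh point `t_n = T * (n/N)^r`. -/
noncomputable def gmesh (T r : ℝ) (N n : ℕ) : ℝ := T * ((n : ℝ) / (N : ℝ)) ^ r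

/-- The Beta function `B(m,n) = ∫_0^1 z^{m-1} (1-z)^{n-1} dz`. -/
noncomputable def betaFun (m n : ℝ) : ℝ := ∫ z in (0:ℝ)..1, z ^ (m - 1) * (1 - z) ^ (n - 1)

open MeasureTheory intervalIntegral Set in
lemma aux_int_sub (a t c d : ℝ) (ha : 0 < a) :
    IntervalIntegrable (fun s => (t - s) ^ (a - 1)) volume c d := by
  have h := intervalIntegral.intervalIntegrable_rpow' (a := t - c) (b := t - d)
    (r := a - 1) (by linarith)
  simpa using h.comp_sub_left t

open MeasureTheory intervalIntegral Set in
lemma aux_intI (a b t : ℝ) (ha : 0 < a) (hb : 0 < b) (ht : 0 < t) :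
    IntervalIntegrable (fun s => (t - s) ^ (a - 1) * s ^ (b - 1)) volume 0 t := by
  have h1 : IntervalIntegrable (fun s => (t - s) ^ (a - 1) * s ^ (b - 1)) volume 0 (t/2) := by
    have hi : IntervalIntegrable (fun s : ℝ => s ^ (b - 1)) volume 0 (t/2) :=
      intervalIntegral.intervalIntegrable_rpow' (by linarith)
    refine hi.continuousOn_mul ?_
    apply ContinuousOn.rpow_const (by fun_prop)
    intro x hx
    rw [Set.uIcc_of_le (by linarith)] at hx
    left
    have := hx.2
    intro h0
    nlinarith [hx.1]
  have h2 : IntervalIntegrable (fun s => (t - s) ^ (a - 1) * s ^ (b - 1)) volume (t/2) t := by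
    have hi : IntervalIntegrable (fun s : ℝ => (t - s) ^ (a - 1)) volume (t/2) t :=
      aux_int_sub a t _ _ ha
    refine hi.mul_continuousOn ?_
    apply ContinuousOn.rpow_const (by fun_prop)
    intro x hx
    rw [Set.uIcc_of_le (by linarith)] at hx
    left
    have := hx.1
    intro h0
    nlinarith
  exact h1.trans h2

lemma aux_beta_symm (a b : ℝ) : betaFun a b = betaFun b a := by
  unfold betaFun
  have h := intervalIntegral.integral_comp_sub_left (a := 0) (b := 1)
    (fun z : ℝ => z ^ (b - 1) * (1 - z) ^ (a - 1)) 1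
  simp only [sub_sub_cancel, sub_zero, sub_self] at h
  rw [← h]
  exact intervalIntegral.integral_congr fun x hx => by ring

lemma aux_beta_val (a b t : ℝ) (ha : 0 < a) (hb : 0 < b) (ht : 0 < t) :
    (∫ s in (0:ℝ)..t, (t - s) ^ (a - 1) * s ^ (b - 1)) = t ^ (a + b - 1) * betaFun a b := by
  have h2 := intervalIntegral.smul_integral_comp_mul_left
    (a := 0) (b := 1) (fun s : ℝ => (t - s) ^ (a - 1) * s ^ (b - 1)) t
  simp only [mul_zero, mul_one] at h2
  rw [← h2]
  have key : Set.EqOn (fun z : ℝ => (t - t * z) ^ (a - 1) * (t * z) ^ (b - 1))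
      (fun z : ℝ => t ^ (a + b - 2) * (z ^ (b - 1) * (1 - z) ^ (a - 1)))
      (Set.uIcc (0:ℝ) 1) := by
    intro z hz
    rw [Set.uIcc_of_le zero_le_one] at hz
    have h1 : t - t * z = t * (1 - z) := by ring
    simp only
    rw [h1, Real.mul_rpow ht.le (by linarith [hz.2]), Real.mul_rpow ht.le hz.1]
    have h3 : t ^ (a - 1) * t ^ (b - 1) = t ^ (a + b - 2) := by
      rw [← Real.rpow_add ht]; congr 1; ring
    calc t ^ (a - 1) * (1 - z) ^ (a - 1) * (t ^ (b - 1) * z ^ (b - 1))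
        = (t ^ (a - 1) * t ^ (b - 1)) * (z ^ (b - 1) * (1 - z) ^ (a - 1)) := by ring
      _ = t ^ (a + b - 2) * (z ^ (b - 1) * (1 - z) ^ (a - 1)) := by rw [h3]
  rw [intervalIntegral.integral_congr key, intervalIntegral.integral_const_mul,
    ← aux_beta_symm b a]
  show t * (t ^ (a + b - 2) * betaFun b a) = _
  rw [aux_beta_symm b a, ← mul_assoc]
  congr 1
  nth_rewrite 1 [← Real.rpow_one t]
  rw [← Real.rpow_add ht]
  congr 1; ring

lemma gmesh_nonneg (T r : ℝ) (hT : 0 < T) (N j : ℕ) : 0 ≤ gmesh T r N j :=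
  mul_nonneg hT.le (Real.rpow_nonneg (by positivity) _)

lemma gmesh_pos (T r : ℝ) (hT : 0 < T) (N j : ℕ) (hj : 1 ≤ j) (hN : 1 ≤ N) :
    0 < gmesh T r N j := by
  have hN' : (0:ℝ) < N := by exact_mod_cast hN
  have hj' : (0:ℝ) < j := by exact_mod_cast hj
  exact mul_pos hT (Real.rpow_pos_of_pos (by positivity) _)

lemma gmesh_mono (T r : ℝ) (hT : 0 < T) (hr : 0 ≤ r) (N : ℕ) {i j : ℕ} (hij : i ≤ j) :
    gmesh T r N i ≤ gmesh T r N j := by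
  unfold gmesh
  have hij' : (i:ℝ) ≤ j := by exact_mod_cast hij
  have hN : (0:ℝ) ≤ N := Nat.cast_nonneg N
  apply mul_le_mul_of_nonneg_left _ hT.le
  apply Real.rpow_le_rpow (by positivity) _ hr
  gcongr

lemma gmesh_succ_le (T r : ℝ) (hT : 0 < T) (hr : 0 ≤ r) (N j : ℕ) (hj : 1 ≤ j) (hN : 1 ≤ N) :
    gmesh T r N (j + 1) ≤ 2 ^ r * gmesh T r N j := by
  unfold gmesh
  have hN' : (0:ℝ) < N := by exact_mod_cast hN
  have hj' : (1:ℝ) ≤ j := by exact_mod_cast hj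
  have h1 : ((j:ℝ) + 1) / N ≤ 2 * ((j:ℝ) / N) := by
    rw [div_le_iff₀ hN']
    field_simp
    linarith
  have hcast : ((j+1 : ℕ) : ℝ) = (j:ℝ) + 1 := by push_cast; ring
  rw [hcast]
  calc T * (((j:ℝ)+1) / N) ^ r ≤ T * (2 * ((j:ℝ)/N)) ^ r := by
        apply mul_le_mul_of_nonneg_left _ hT.le
        exact Real.rpow_le_rpow (by positivity) h1 hr
    _ = 2 ^ r * (T * ((j:ℝ)/N) ^ r) := by
        rw [Real.mul_rpow (by norm_num) (by positivity)]; ring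

open MeasureTheory intervalIntegral Set in
/-- A Beta-type sum bound on graded meshes (equation `eq.tidleB`). -/
theorem stmt19 (T r γ μ : ℝ) (hT : 0 < T) (hr : 1 ≤ r)
    (hγ : γ ∈ Set.Ioc (0:ℝ) 1) (hμ : μ ∈ Set.Ioc (0:ℝ) 1) (m : ℕ) (hm : 1 ≤ m) :
    ∀ N : ℕ, 2 ≤ N → ∀ n : ℕ, 2 ≤ n → n ≤ N → m ≤ n - 1 →
      (∑ j ∈ Finset.Icc 1 (n - m),
          ∫ s in (gmesh T r N j)..(gmesh T r N (j + 1)),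
            (gmesh T r N n - s) ^ ((m : ℝ) * γ - 1) * (gmesh T r N j) ^ (μ - 1))
        ≤ ((2:ℝ) ^ (r * (1 - μ)) * betaFun ((m : ℝ) * γ) μ
            * max ((2:ℝ) ^ (1 - (m : ℝ) * γ - μ)) 1)
          * (gmesh T r N n) ^ ((m : ℝ) * γ + μ - 1) := by
  intro N hN n hn2 hnN hmn
  obtain ⟨hγ0, hγ1⟩ := hγ
  obtain ⟨hμ0, hμ1⟩ := hμ
  have hr0 : (0:ℝ) ≤ r := by linarith
  have hN1 : 1 ≤ N := by omega
  set a : ℝ := (m:ℝ) * γ with ha_def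
  have ha : 0 < a := by
    have : (1:ℝ) ≤ m := by exact_mod_cast hm
    positivity
  set t : ℝ := gmesh T r N n with ht_def
  have ht : 0 < t := gmesh_pos T r hT N n (by omega) hN1
  set k : ℕ := n - m with hk_def
  have hk1 : 1 ≤ k := by omega
  have hkn : k + 1 ≤ n := by omega
  set I : ℝ → ℝ := fun s => (t - s) ^ (a - 1) * s ^ (μ - 1) with hI_def
  have hI : IntervalIntegrable I volume 0 t := aux_intI a μ t ha hμ0 ht
  -- subinterval integrability
  have hsub : ∀ c d : ℕ, c ≤ d → d ≤ n → IntervalIntegrable I volume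
      (gmesh T r N c) (gmesh T r N d) := by
    intro c d hcd hdn
    apply hI.mono_set
    rw [Set.uIcc_of_le (gmesh_mono T r hT hr0 N hcd),
      Set.uIcc_of_le ht.le]
    exact Set.Icc_subset_Icc (gmesh_nonneg T r hT N c)
      (gmesh_mono T r hT hr0 N hdn)
  have hC : (0:ℝ) < (2:ℝ) ^ (r * (1 - μ)) := Real.rpow_pos_of_pos two_pos _
  -- step 1: per-piece bound
  have step1 : ∀ j ∈ Finset.Icc 1 k,
      (∫ s in (gmesh T r N j)..(gmesh T r N (j + 1)),
        (t - s) ^ (a - 1) * (gmesh T r N j) ^ (μ - 1))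
      ≤ (2:ℝ) ^ (r * (1 - μ)) * ∫ s in (gmesh T r N j)..(gmesh T r N (j + 1)), I s := by
    intro j hj
    rw [Finset.mem_Icc] at hj
    obtain ⟨hj1, hjk⟩ := hj
    have htj : 0 < gmesh T r N j := gmesh_pos T r hT N j hj1 hN1
    have hmono : gmesh T r N j ≤ gmesh T r N (j+1) := gmesh_mono T r hT hr0 N (by omega)
    have hjtop : gmesh T r N (j+1) ≤ t := gmesh_mono T r hT hr0 N (by omega)
    have hdoub : gmesh T r N (j+1) ≤ 2 ^ r * gmesh T r N j :=
      gmesh_succ_le T r hT hr0 N j hj1 hN1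
    rw [← intervalIntegral.integral_const_mul]
    apply intervalIntegral.integral_mono_on hmono
    · exact (aux_int_sub a t _ _ ha).mul_const _
    · exact ((hsub j (j+1) (by omega) (by omega))).const_mul _
    · intro s hs
      obtain ⟨hs1, hs2⟩ := hs
      have hst : s ≤ t := le_trans hs2 hjtop
      have hs0 : 0 < s := lt_of_lt_of_le htj hs1
      have h2r : (0:ℝ) < (2:ℝ) ^ r := Real.rpow_pos_of_pos two_pos _
      have key : (gmesh T r N j) ^ (μ - 1) ≤ (2:ℝ) ^ (r * (1 - μ)) * s ^ (μ - 1) := by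
        have hx : (0:ℝ) < s * ((2:ℝ) ^ r)⁻¹ := by positivity
        have hxy : s * ((2:ℝ) ^ r)⁻¹ ≤ gmesh T r N j := by
          rw [mul_inv_le_iff₀ h2r, mul_comm]
          exact le_trans hs2 hdoub
        have h1 := Real.rpow_le_rpow_of_nonpos hx hxy (by linarith : μ - 1 ≤ 0)
        calc (gmesh T r N j) ^ (μ - 1) ≤ (s * ((2:ℝ) ^ r)⁻¹) ^ (μ - 1) := h1
          _ = (2:ℝ) ^ (r * (1 - μ)) * s ^ (μ - 1) := by
            rw [Real.mul_rpow hs0.le (by positivity),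
              ← Real.rpow_neg (by norm_num : (0:ℝ) ≤ 2),
              ← Real.rpow_mul (by norm_num : (0:ℝ) ≤ 2),
              show -r * (μ - 1) = r * (1 - μ) by ring]
            ring
      have hpow : (0:ℝ) ≤ (t - s) ^ (a - 1) := Real.rpow_nonneg (by linarith) _
      calc (t - s) ^ (a - 1) * (gmesh T r N j) ^ (μ - 1)
          ≤ (t - s) ^ (a - 1) * ((2:ℝ) ^ (r * (1 - μ)) * s ^ (μ - 1)) :=
            mul_le_mul_of_nonneg_left key hpow
        _ = (2:ℝ) ^ (r * (1 - μ)) * ((t - s) ^ (a - 1) * s ^ (μ - 1)) := by ring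
  -- step 2: sum of integrals telescopes
  have step2 : (∑ j ∈ Finset.Icc 1 k,
      ∫ s in (gmesh T r N j)..(gmesh T r N (j + 1)), I s)
      = ∫ s in (gmesh T r N 1)..(gmesh T r N (k + 1)), I s := by
    rw [← Finset.Ico_add_one_right_eq_Icc, Finset.sum_Ico_eq_sum_range]
    norm_num
    have := intervalIntegral.sum_integral_adjacent_intervals (μ := volume)
      (a := fun i => gmesh T r N (i + 1)) (n := k) (f := I)
      (fun i hi => hsub (i+1) (i+2) (by omega) (by omega))
    convert this using 1
    apply Finset.sum_congr rfl
    intro i _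
    rw [add_comm 1 i]
  -- step 3: extend to [0, t]
  have step3 : (∫ s in (gmesh T r N 1)..(gmesh T r N (k + 1)), I s)
      ≤ ∫ s in (0:ℝ)..t, I s := by
    apply intervalIntegral.integral_mono_interval (gmesh_nonneg T r hT N 1)
      (gmesh_mono T r hT hr0 N (by omega)) (gmesh_mono T r hT hr0 N hkn) _ hI
    filter_upwards [MeasureTheory.ae_restrict_mem measurableSet_Ioc] with s hs
    exact mul_nonneg (Real.rpow_nonneg (by linarith [hs.2]) _) (Real.rpow_nonneg hs.1.le _)
  -- step 4: evaluate the beta integral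
  have step4 : (∫ s in (0:ℝ)..t, I s) = t ^ (a + μ - 1) * betaFun a μ :=
    aux_beta_val a μ t ha hμ0 ht
  have hbeta : 0 ≤ betaFun a μ := by
    apply intervalIntegral.integral_nonneg zero_le_one
    intro x hx
    exact mul_nonneg (Real.rpow_nonneg hx.1 _) (Real.rpow_nonneg (by linarith [hx.2]) _)
  have hmax : (1:ℝ) ≤ max ((2:ℝ) ^ (1 - a - μ)) 1 := le_max_right _ _
  calc (∑ j ∈ Finset.Icc 1 k,
        ∫ s in (gmesh T r N j)..(gmesh T r N (j + 1)),
          (t - s) ^ (a - 1) * (gmesh T r N j) ^ (μ - 1))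
      ≤ ∑ j ∈ Finset.Icc 1 k,
        (2:ℝ) ^ (r * (1 - μ)) * ∫ s in (gmesh T r N j)..(gmesh T r N (j + 1)), I s :=
        Finset.sum_le_sum step1
    _ = (2:ℝ) ^ (r * (1 - μ)) * ∑ j ∈ Finset.Icc 1 k,
        ∫ s in (gmesh T r N j)..(gmesh T r N (j + 1)), I s := by rw [Finset.mul_sum]
    _ = (2:ℝ) ^ (r * (1 - μ)) * ∫ s in (gmesh T r N 1)..(gmesh T r N (k + 1)), I s := by
        rw [step2]
    _ ≤ (2:ℝ) ^ (r * (1 - μ)) * ∫ s in (0:ℝ)..t, I s :=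
        mul_le_mul_of_nonneg_left step3 hC.le
    _ = (2:ℝ) ^ (r * (1 - μ)) * betaFun a μ * t ^ (a + μ - 1) := by
        rw [step4]; ring
    _ ≤ ((2:ℝ) ^ (r * (1 - μ)) * betaFun a μ * max ((2:ℝ) ^ (1 - a - μ)) 1)
        * t ^ (a + μ - 1) := by
        have h0 : 0 ≤ (2:ℝ) ^ (r * (1 - μ)) * betaFun a μ * t ^ (a + μ - 1) := by
          apply mul_nonneg (mul_nonneg hC.le hbeta) (Real.rpow_nonneg ht.le _)
        nlinarith [Real.rpow_nonneg ht.le (a + μ - 1)]
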